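/- Let V be an idempotent variety and F₂ its free algebra on two generators. If s ⇢ r, s' ⇢ r', s' ⇢ r'', and s'' ⇢ r'', then s̄(s',s'') ⇢ r̄(r',r''), where s̄(s',s'') denotes the interpretation in F₂ of the term ŝ under the assignment x ↦ s', z ↦ s''. -/
import Mathlib


/-- A signature: a type of operation symbols with arities. -/
structure Sgn where
  ops : Type
  arity : ops → ℕ

/-- Terms over a signature with variables from `V`. -/
inductive Trm (S : Sgn) (V : Type) : Type
  | var : V → Trm S V
  | op : (f : S.ops) → (Fin (S.arity f) → Trm S V) → Trm S V

/-- An algebra for a signature. -/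
structure Alg (S : Sgn) where
  carrier : Type
  interp : (f : S.ops) → (Fin (S.arity f) → carrier) → carrier

/-- Evaluation of a term in an algebra under an assignment. -/
def Trm.eval {S : Sgn} {V : Type} (A : Alg S) (asgn : V → A.carrier) :
    Trm S V → A.carrier
  | .var v => asgn v
  | .op f args => A.interp f (fun i => (args i).eval A asgn)

/-- The identity `t ≈ u` holds throughout the class (variety) `K`. -/
def HoldsIn {S : Sgn} {V : Type} (K : Set (Alg S)) (t u : Trm S V) : Prop :=
  ∀ A ∈ K, ∀ asgn : V → A.carrier, t.eval A asgn = u.eval A asgn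

/-- Substitution of terms for variables. -/
def Trm.subst {S : Sgn} {V W : Type} (σ : V → Trm S W) : Trm S V → Trm S W
  | .var v => σ v
  | .op f args => .op f (fun i => (args i).subst σ)

/-- Every basic operation is idempotent throughout `K`. -/
def IdemK {S : Sgn} (K : Set (Alg S)) : Prop :=
  ∀ A ∈ K, ∀ (f : S.ops) (a : A.carrier), A.interp f (fun _ => a) = a

abbrev T3 (S : Sgn) := Trm S (Fin 3)
abbrev T2 (S : Sgn) := Trm S (Fin 2)

def x3 {S : Sgn} : T3 S := .var 0
def y3 {S : Sgn} : T3 S := .var 1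
def z3 {S : Sgn} : T3 S := .var 2

/-- The generator x̄ of the free algebra on two generators (terms as representatives). -/
def xF {S : Sgn} : T2 S := .var 0
/-- The generator z̄. -/
def zF {S : Sgn} : T2 S := .var 1

/-- `app3 t a b c` is the term `t(a,b,c)`. -/
def app3 {S : Sgn} {V : Type} (t : T3 S) (a b c : Trm S V) : Trm S V :=
  t.subst ![a, b, c]

/-- The binary term `ŝ(x,z)` viewed as a ternary term (not depending on `y`). -/
def bin3 {S : Sgn} (s : T2 S) : T3 S := s.subst ![x3, z3]

/-- `sub2 s a b` is `s̄(a,b)`, the composition of binary terms. -/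
def sub2 {S : Sgn} (s a b : T2 S) : T2 S := s.subst ![a, b]

/-- Dashed arrow `s ⇢ r`. -/
def DashedTo {S : Sgn} (K : Set (Alg S)) (s r : T2 S) : Prop :=
  ∃ t : T3 S, HoldsIn K (bin3 s) (app3 t x3 x3 z3) ∧ HoldsIn K (app3 t x3 z3 z3) (bin3 r)

/-- Solid arrow `s → r`. -/
def SolidTo {S : Sgn} (K : Set (Alg S)) (s r : T2 S) : Prop :=
  ∃ t : T3 S, HoldsIn K (bin3 s) (app3 t x3 x3 z3) ∧ HoldsIn K (app3 t x3 z3 z3) (bin3 r) ∧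
    HoldsIn K (app3 t x3 y3 x3) x3



lemma eval_subst {S : Sgn} {V W : Type} (A : Alg S) (σ : V → Trm S W)
    (asgn : W → A.carrier) (t : Trm S V) :
    (t.subst σ).eval A asgn = t.eval A (fun v => (σ v).eval A asgn) := by
  induction t with
  | var v => rfl
  | op f args ih => simp only [Trm.subst, Trm.eval]; congr 1; funext i; exact ih i

lemma eval_app3 {S : Sgn} {V : Type} (A : Alg S) (asgn : V → A.carrier)
    (t : T3 S) (a b c : Trm S V) :
    (app3 t a b c).eval A asgn =
      t.eval A ![a.eval A asgn, b.eval A asgn, c.eval A asgn] := by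
  rw [app3, eval_subst]; congr 1; funext v; fin_cases v <;> rfl

lemma eval_bin3 {S : Sgn} (A : Alg S) (asgn : Fin 3 → A.carrier) (s : T2 S) :
    (bin3 s).eval A asgn = s.eval A ![asgn 0, asgn 2] := by
  rw [bin3, eval_subst]; congr 1; funext v; fin_cases v <;> rfl

lemma eval_sub2 {S : Sgn} (A : Alg S) (asgn : Fin 2 → A.carrier) (s a b : T2 S) :
    (sub2 s a b).eval A asgn = s.eval A ![a.eval A asgn, b.eval A asgn] := by
  rw [sub2, eval_subst]; congr 1; funext v; fin_cases v <;> rfl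

/-- if `s ⇢ r`, `s' ⇢ r'`, `s' ⇢ r''` and `s'' ⇢ r''`,
then `s̄(s',s'') ⇢ r̄(r',r'')`. -/
theorem dashed_subst {S : Sgn} (K : Set (Alg S)) (hid : IdemK K)
    (s r s' r' s'' r'' : T2 S)
    (h1 : DashedTo K s r) (h2 : DashedTo K s' r')
    (h3 : DashedTo K s' r'') (h4 : DashedTo K s'' r'') :
    DashedTo K (sub2 s s' s'') (sub2 r r' r'') := by
  obtain ⟨t, ht1, ht2⟩ := h1
  obtain ⟨t1, h2a, h2b⟩ := h2
  obtain ⟨t2, h3a, h3b⟩ := h3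
  obtain ⟨t3, h4a, h4b⟩ := h4
  refine ⟨app3 t t1 t2 t3, ?_, ?_⟩
  · intro A hA asgn
    have e2 := h2a A hA ![asgn 0, asgn 0, asgn 2]
    have e3 := h3a A hA ![asgn 0, asgn 0, asgn 2]
    have e4 := h4a A hA ![asgn 0, asgn 0, asgn 2]
    simp only [eval_bin3, eval_app3, x3, z3, Trm.eval, Matrix.cons_val_zero,
      Matrix.cons_val_one, Matrix.head_cons, Matrix.cons_val_two, Matrix.tail_cons] at e2 e3 e4 ⊢
    rw [eval_sub2, ← e2, ← e3, ← e4]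
    have e1 := ht1 A hA ![s'.eval A ![asgn 0, asgn 2], s'.eval A ![asgn 0, asgn 2],
      s''.eval A ![asgn 0, asgn 2]]
    simp only [eval_bin3, eval_app3, x3, z3, Trm.eval, Matrix.cons_val_zero,
      Matrix.cons_val_one, Matrix.head_cons, Matrix.cons_val_two, Matrix.tail_cons] at e1
    exact e1
  · intro A hA asgn
    have e2 := h2b A hA ![asgn 0, asgn 2, asgn 2]
    have e3 := h3b A hA ![asgn 0, asgn 2, asgn 2]
    have e4 := h4b A hA ![asgn 0, asgn 2, asgn 2]
    simp only [eval_bin3, eval_app3, x3, z3, Trm.eval, Matrix.cons_val_zero,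
      Matrix.cons_val_one, Matrix.head_cons, Matrix.cons_val_two, Matrix.tail_cons] at e2 e3 e4 ⊢
    rw [eval_sub2, e2, e3, e4]
    have e1 := ht2 A hA ![r'.eval A ![asgn 0, asgn 2], r''.eval A ![asgn 0, asgn 2],
      r''.eval A ![asgn 0, asgn 2]]
    simp only [eval_bin3, eval_app3, x3, z3, Trm.eval, Matrix.cons_val_zero,
      Matrix.cons_val_one, Matrix.head_cons, Matrix.cons_val_two, Matrix.tail_cons] at e1
    exact e1
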